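/- Let λ ≤ Λ be a speed function, f₁, f₂ be 1-Lipschitz nondecreasing functions, and h₁, h₂ the corresponding Hopf–Lax functions. Then for every (t₀,ξ₀) ∈ [0,T] × ℝ: |h₁(t₀,ξ₀) − h₂(t₀,ξ₀)| ≤ sup{ |f₁(ξ) − f₂(ξ)| : |ξ − ξ₀| ≤ t₀·Λ }. -/

import Mathlib

/-- The Hopf–Lax kernel `φ`. -/
noncomputable def hlKernel (ξ : ℝ) : ℝ :=
  if ξ ≤ -1 then 0 else if ξ < 1 then (ξ + 1) ^ 2 / 4 else ξ

/-- A path is piecewise `C¹` on `[a,b]`: it is continuous, and `C¹` on each piece of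
some finite partition of `[a,b]`. -/
def PiecewiseC1On (w : ℝ → ℝ) (a b : ℝ) : Prop :=
  ContinuousOn w (Set.Icc a b) ∧
  ∃ (k : ℕ) (s : Fin (k + 1) → ℝ), StrictMono s ∧ s 0 = a ∧ s (Fin.last k) = b ∧
    ∀ i : Fin k, ContDiffOn ℝ 1 w (Set.Icc (s i.castSucc) (s i.succ))

/-- The Hopf–Lax function for a space-time dependent speed `λ` and initial data `f`. -/
noncomputable def hopfLax (lam : ℝ → ℝ → ℝ) (f : ℝ → ℝ) (t ξ : ℝ) : ℝ :=
  sInf {y : ℝ | ∃ w : ℝ → ℝ, PiecewiseC1On w 0 t ∧ w t = ξ ∧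
    y = (∫ s in (0:ℝ)..t, lam s (w s) * hlKernel (deriv w s / lam s (w s))) + f (w 0)}
/-!
Along any admissible path `w` ending at `ξ` the cost is at least `max (ξ - w 0) 0`, because
`φ(v) ≥ max v 0`. Hence a path starting above the light cone `|x - ξ| ≤ tΛ` can be replaced by
the line of slope `-Λ` (cost `0`, lower starting point), and one starting below it by the line
of slope `Λ` (cost `tΛ`, starting point higher by more than the cost saved), without increasing
`cost + f (w 0)` for any nondecreasing `1`-Lipschitz `f`. So both Hopf–Lax infima may be taken
over paths starting in the cone, where `f₁` and `f₂` differ by at most the supremum.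
-/

open Set MeasureTheory intervalIntegral

lemma lipschitzWith_one_of_monotone_of_sub_le {f : ℝ → ℝ} (hmono : Monotone f)
    (hlip : ∀ x y, x ≤ y → f y - f x ≤ y - x) : LipschitzWith 1 f := by
  refine .of_le_add fun x y => ?_
  rcases le_total x y with h | h
  · linarith [hmono h, dist_nonneg (x := x) (y := y)]
  · linarith [hlip y x h, Real.dist_eq x y, le_abs_self (x - y)]

lemma hlKernel_nonneg (ξ : ℝ) : 0 ≤ hlKernel ξ := by
  unfold hlKernel; split_ifs <;> first | positivity | linarith

lemma le_hlKernel (ξ : ℝ) : ξ ≤ hlKernel ξ := by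
  unfold hlKernel; split_ifs <;> nlinarith [sq_nonneg (ξ - 1)]

lemma hlKernel_le_abs_add_one (ξ : ℝ) : hlKernel ξ ≤ |ξ| + 1 := by
  unfold hlKernel; split_ifs <;> nlinarith [le_abs_self ξ, neg_abs_le ξ, abs_nonneg ξ]

lemma hlKernel_of_le_neg_one {ξ : ℝ} (h : ξ ≤ -1) : hlKernel ξ = 0 := if_pos h

lemma hlKernel_of_one_le {ξ : ℝ} (h : 1 ≤ ξ) : hlKernel ξ = ξ := by
  unfold hlKernel; rw [if_neg (by linarith), if_neg (not_lt.2 h)]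

lemma measurable_hlKernel : Measurable hlKernel :=
  Measurable.ite (measurableSet_le measurable_id measurable_const) measurable_const <|
    Measurable.ite (measurableSet_lt measurable_id measurable_const)
      (((measurable_id.add_const 1).pow_const 2).div_const 4) measurable_id

section Lagrangian

noncomputable def hlLagrangian (l v : ℝ) : ℝ := l * hlKernel (v / l)

variable {l v : ℝ}

lemma hlLagrangian_nonneg (hl : 0 ≤ l) (v : ℝ) : 0 ≤ hlLagrangian l v :=
  mul_nonneg hl (hlKernel_nonneg _)

lemma le_hlLagrangian (hl : 0 < l) (v : ℝ) : v ≤ hlLagrangian l v :=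
  calc v = l * (v / l) := by field_simp
    _ ≤ hlLagrangian l v := mul_le_mul_of_nonneg_left (le_hlKernel _) hl.le

lemma hlLagrangian_le (hl : 0 < l) (v : ℝ) : hlLagrangian l v ≤ l + |v| :=
  calc hlLagrangian l v ≤ l * (|v / l| + 1) :=
        mul_le_mul_of_nonneg_left (hlKernel_le_abs_add_one _) hl.le
    _ = l + |v| := by rw [abs_div, abs_of_pos hl]; field_simp; ring

lemma hlLagrangian_of_le_neg (hl : 0 < l) (h : v ≤ -l) : hlLagrangian l v = 0 := by
  rw [hlLagrangian, hlKernel_of_le_neg_one (by rwa [div_le_iff₀ hl, neg_one_mul]), mul_zero]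

lemma hlLagrangian_of_le (hl : 0 < l) (h : l ≤ v) : hlLagrangian l v = v := by
  rw [hlLagrangian, hlKernel_of_one_le ((one_le_div hl).2 h)]; field_simp

lemma measurable_hlLagrangian : Measurable (Function.uncurry hlLagrangian) :=
  measurable_fst.mul (measurable_hlKernel.comp (measurable_snd.div measurable_fst))

end Lagrangian

theorem PiecewiseC1On.induction {w : ℝ → ℝ} {a b : ℝ} (hw : PiecewiseC1On w a b)
    (Q : ℝ → ℝ → Prop) (refl : ∀ x, Q x x) (trans : ∀ x y z, Q x y → Q y z → Q x z)
    (piece : ∀ c d, c < d → ContDiffOn ℝ 1 w (Icc c d) → Q c d) : Q a b := by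
  obtain ⟨-, k, s, hs, rfl, rfl, hC⟩ := hw
  suffices ∀ j, Q (s 0) (s j) from this _
  intro j
  induction j using Fin.induction with
  | zero => exact refl _
  | succ i ih => exact trans _ _ _ ih (piece _ _ (hs i.castSucc_lt_succ) (hC i))

theorem ContDiff.piecewiseC1On {w : ℝ → ℝ} (hw : ContDiff ℝ 1 w) {a b : ℝ} (hab : a ≤ b) :
    PiecewiseC1On w a b := by
  refine ⟨hw.continuous.continuousOn, ?_⟩
  obtain rfl | hab := hab.eq_or_lt
  · exact ⟨0, fun _ => a, fun i j h => (h.ne (Subsingleton.elim (α := Fin 1) i j)).elim,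
      rfl, rfl, fun i => i.elim0⟩
  · refine ⟨1, ![a, b], ?_, rfl, rfl, fun i => ?_⟩
    · simpa [Fin.strictMono_iff_lt_succ] using hab
    · fin_cases i
      simpa using hw.contDiffOn

lemma ContDiffOn.exists_abs_deriv_le {w : ℝ → ℝ} {c d : ℝ} (hcd : c < d)
    (hw : ContDiffOn ℝ 1 w (Icc c d)) : ∃ M, ∀ x ∈ Ioo c d, |deriv w x| ≤ M := by
  obtain ⟨M, hM⟩ := isCompact_Icc.exists_bound_of_continuousOn
    (hw.continuousOn_derivWithin (uniqueDiffOn_Icc hcd) le_rfl)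
  refine ⟨M, fun x hx => ?_⟩
  rw [← derivWithin_of_mem_nhds (Icc_mem_nhds hx.1 hx.2)]
  exact hM x (Ioo_subset_Icc_self hx)

section Cost

variable {Λ : ℝ} {lam : ℝ → ℝ → ℝ}

noncomputable def pathCost (lam : ℝ → ℝ → ℝ) (w : ℝ → ℝ) (t : ℝ) : ℝ :=
  ∫ s in (0:ℝ)..t, hlLagrangian (lam s (w s)) (deriv w s)

lemma hopfLax_eq (lam : ℝ → ℝ → ℝ) (f : ℝ → ℝ) (t ξ : ℝ) :
    hopfLax lam f t ξ =
      sInf {y | ∃ w, PiecewiseC1On w 0 t ∧ w t = ξ ∧ y = pathCost lam w t + f (w 0)} :=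
  rfl

lemma pathCost_nonneg (hpos : ∀ t ξ, 0 < lam t ξ) (w : ℝ → ℝ) {t : ℝ} (ht : 0 ≤ t) :
    0 ≤ pathCost lam w t :=
  integral_nonneg ht fun s _ => hlLagrangian_nonneg (hpos s (w s)).le _

lemma integrableOn_hlLagrangian_of_contDiffOn (hmeas : Measurable (Function.uncurry lam))
    (hpos : ∀ t ξ, 0 < lam t ξ) (hbd : ∀ t ξ, lam t ξ ≤ Λ) {w : ℝ → ℝ} {c d : ℝ} (hcd : c < d)
    (hw : ContDiffOn ℝ 1 w (Icc c d)) :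
    IntegrableOn (fun s => hlLagrangian (lam s (w s)) (deriv w s)) (Icc c d) := by
  obtain ⟨M, hM⟩ := hw.exists_abs_deriv_le hcd
  have hlam : AEMeasurable (fun s => lam s (w s)) (volume.restrict (Ioo c d)) :=
    hmeas.comp_aemeasurable <| aemeasurable_id.prodMk <|
      (hw.continuousOn.mono Ioo_subset_Icc_self).aemeasurable measurableSet_Ioo
  rw [integrableOn_Icc_iff_integrableOn_Ioo]
  refine .of_bound measure_Ioo_lt_top (measurable_hlLagrangian.comp_aemeasurable
    (hlam.prodMk (measurable_deriv w).aemeasurable)).aestronglyMeasurable (Λ + M) ?_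
  refine ae_restrict_of_forall_mem measurableSet_Ioo fun x hx => ?_
  have hl := hpos x (w x)
  rw [Real.norm_eq_abs, abs_of_nonneg (hlLagrangian_nonneg hl.le _)]
  linarith [hlLagrangian_le hl (deriv w x), hbd x (w x), hM x hx]

lemma sub_le_integral_hlLagrangian_of_contDiffOn (hmeas : Measurable (Function.uncurry lam))
    (hpos : ∀ t ξ, 0 < lam t ξ) (hbd : ∀ t ξ, lam t ξ ≤ Λ) {w : ℝ → ℝ} {c d : ℝ} (hcd : c < d)
    (hw : ContDiffOn ℝ 1 w (Icc c d)) :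
    IntervalIntegrable (fun s => hlLagrangian (lam s (w s)) (deriv w s)) volume c d ∧
      w d - w c ≤ ∫ s in c..d, hlLagrangian (lam s (w s)) (deriv w s) := by
  have hint := integrableOn_hlLagrangian_of_contDiffOn hmeas hpos hbd hcd hw
  refine ⟨(intervalIntegrable_iff_integrableOn_Icc_of_le hcd.le).2 hint,
    sub_le_integral_of_hasDeriv_right_of_le hcd.le hw.continuousOn (fun x hx => ?_) hint
      fun x _ => le_hlLagrangian (hpos x (w x)) _⟩
  exact ((hw.differentiableOn one_ne_zero).differentiableAt
    (Icc_mem_nhds hx.1 hx.2)).hasDerivAt.hasDerivWithinAt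

lemma PiecewiseC1On.sub_le_pathCost (hmeas : Measurable (Function.uncurry lam))
    (hpos : ∀ t ξ, 0 < lam t ξ) (hbd : ∀ t ξ, lam t ξ ≤ Λ) {w : ℝ → ℝ} {t : ℝ}
    (hw : PiecewiseC1On w 0 t) :
    w t - w 0 ≤ pathCost lam w t :=
  (hw.induction (fun a b => IntervalIntegrable (fun s => hlLagrangian (lam s (w s)) (deriv w s))
      volume a b ∧ w b - w a ≤ ∫ s in a..b, hlLagrangian (lam s (w s)) (deriv w s))
    (fun a => ⟨.refl, by simp⟩)
    (fun a b c ⟨hab, hab'⟩ ⟨hbc, hbc'⟩ => ⟨hab.trans hbc, by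
      rw [← integral_add_adjacent_intervals hab hbc]; linarith⟩)
    fun _ _ hcd hwcd => sub_le_integral_hlLagrangian_of_contDiffOn hmeas hpos hbd hcd hwcd).2

lemma pathCost_line {c v C : ℝ} (hcost : ∀ s, hlLagrangian (lam s (c + v * s)) v = C) (t : ℝ) :
    pathCost lam (fun s => c + v * s) t = C * t := by
  have hderiv (s : ℝ) : deriv (fun s => c + v * s) s = v := by simp
  simp [pathCost, hderiv, hcost, mul_comm]

lemma le_pathCost_add (hmeas : Measurable (Function.uncurry lam)) (hpos : ∀ t ξ, 0 < lam t ξ)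
    (hbd : ∀ t ξ, lam t ξ ≤ Λ) {f : ℝ → ℝ} (hmono : Monotone f)
    (hlip : ∀ x y, x ≤ y → f y - f x ≤ y - x) {w : ℝ → ℝ} {t : ℝ} (ht : 0 ≤ t)
    (hw : PiecewiseC1On w 0 t) : f (w t) ≤ pathCost lam w t + f (w 0) := by
  have hcost := hw.sub_le_pathCost hmeas hpos hbd
  rcases le_total (w 0) (w t) with h | h
  · linarith [hlip _ _ h]
  · linarith [hmono h, pathCost_nonneg hpos w ht]

theorem exists_lightCone_path (hmeas : Measurable (Function.uncurry lam))
    (hpos : ∀ t ξ, 0 < lam t ξ) (hbd : ∀ t ξ, lam t ξ ≤ Λ) {w : ℝ → ℝ} {t : ℝ} (ht : 0 ≤ t)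
    (hw : PiecewiseC1On w 0 t) :
    ∃ w', PiecewiseC1On w' 0 t ∧ w' t = w t ∧ |w' 0 - w t| ≤ t * Λ ∧
      ∀ f : ℝ → ℝ, Monotone f → (∀ x y, x ≤ y → f y - f x ≤ y - x) →
        pathCost lam w' t + f (w' 0) ≤ pathCost lam w t + f (w 0) := by
  have hΛ : 0 < Λ := (hpos 0 0).trans_le (hbd 0 0)
  have hline (c v : ℝ) : PiecewiseC1On (fun s => c + v * s) 0 t :=
    (contDiff_const.add (contDiff_const.mul contDiff_id)).piecewiseC1On ht
  have hcost := hw.sub_le_pathCost hmeas hpos hbd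
  have hcost₀ := pathCost_nonneg hpos w ht
  rcases le_or_gt |w 0 - w t| (t * Λ) with hin | hout
  · exact ⟨w, hw, rfl, hin, fun _ _ _ => le_rfl⟩
  rcases lt_abs.1 hout with habove | hbelow
  · have hfree : ∀ s, hlLagrangian (lam s (w t + Λ * t + -Λ * s)) (-Λ) = 0 :=
      fun s => hlLagrangian_of_le_neg (hpos _ _) (neg_le_neg (hbd _ _))
    refine ⟨_, hline (w t + Λ * t) (-Λ), by ring,
      by simp [abs_of_pos hΛ, abs_of_nonneg ht, mul_comm], fun f hmono _ => ?_⟩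
    rw [pathCost_line hfree]
    linarith [hmono (show w t + Λ * t + -Λ * 0 ≤ w 0 by linarith)]
  · have hfull : ∀ s, hlLagrangian (lam s (w t - Λ * t + Λ * s)) Λ = Λ :=
      fun s => hlLagrangian_of_le (hpos _ _) (hbd _ _)
    refine ⟨_, hline (w t - Λ * t) Λ, by ring,
      by simp [abs_of_pos hΛ, abs_of_nonneg ht, mul_comm], fun f _ hlip => ?_⟩
    rw [pathCost_line hfull]
    linarith [hlip (w 0) (w t - Λ * t + Λ * 0) (by linarith)]

lemma hopfLax_le_pathCost_add (hmeas : Measurable (Function.uncurry lam))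
    (hpos : ∀ t ξ, 0 < lam t ξ) (hbd : ∀ t ξ, lam t ξ ≤ Λ) {f : ℝ → ℝ} (hmono : Monotone f)
    (hlip : ∀ x y, x ≤ y → f y - f x ≤ y - x) {w : ℝ → ℝ} {t ξ : ℝ} (ht : 0 ≤ t)
    (hw : PiecewiseC1On w 0 t) (hwt : w t = ξ) :
    hopfLax lam f t ξ ≤ pathCost lam w t + f (w 0) := by
  refine csInf_le ⟨f ξ, ?_⟩ ⟨w, hw, hwt, rfl⟩
  rintro _ ⟨w, hw, rfl, rfl⟩
  exact le_pathCost_add hmeas hpos hbd hmono hlip ht hw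

theorem hopfLax_le_hopfLax_add (hmeas : Measurable (Function.uncurry lam))
    (hpos : ∀ t ξ, 0 < lam t ξ) (hbd : ∀ t ξ, lam t ξ ≤ Λ) {f₁ f₂ : ℝ → ℝ}
    (hmono₁ : Monotone f₁) (hlip₁ : ∀ x y, x ≤ y → f₁ y - f₁ x ≤ y - x)
    (hmono₂ : Monotone f₂) (hlip₂ : ∀ x y, x ≤ y → f₂ y - f₂ x ≤ y - x)
    {t ξ C : ℝ} (ht : 0 ≤ t) (hC : ∀ x, |x - ξ| ≤ t * Λ → f₁ x ≤ f₂ x + C) :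
    hopfLax lam f₁ t ξ ≤ hopfLax lam f₂ t ξ + C := by
  rw [← sub_le_iff_le_add, hopfLax_eq lam f₂]
  refine le_csInf ⟨_, fun _ => ξ, contDiff_const.piecewiseC1On ht, rfl, rfl⟩ ?_
  rintro _ ⟨w, hw, rfl, rfl⟩
  obtain ⟨w', hw', hw't, hcone, hle⟩ := exists_lightCone_path hmeas hpos hbd ht hw
  rw [sub_le_iff_le_add]
  calc hopfLax lam f₁ t (w t) ≤ pathCost lam w' t + f₁ (w' 0) :=
        hopfLax_le_pathCost_add hmeas hpos hbd hmono₁ hlip₁ ht hw' hw't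
    _ ≤ pathCost lam w' t + f₂ (w' 0) + C := by linarith [hC _ hcone]
    _ ≤ pathCost lam w t + f₂ (w 0) + C := by linarith [hle f₂ hmono₂ hlip₂]

end Cost

theorem stmt13_general (T Λ : ℝ) (lam : ℝ → ℝ → ℝ)
    (hmeas : Measurable (Function.uncurry lam))
    (hpos : ∀ t ξ, 0 < lam t ξ) (hbd : ∀ t ξ, lam t ξ ≤ Λ)
    (f₁ f₂ : ℝ → ℝ)
    (hf₁ : ∀ ξ ξ' : ℝ, ξ ≤ ξ' → 0 ≤ f₁ ξ' - f₁ ξ ∧ f₁ ξ' - f₁ ξ ≤ ξ' - ξ)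
    (hf₂ : ∀ ξ ξ' : ℝ, ξ ≤ ξ' → 0 ≤ f₂ ξ' - f₂ ξ ∧ f₂ ξ' - f₂ ξ ≤ ξ' - ξ) :
    ∀ t₀ ∈ Set.Icc (0:ℝ) T, ∀ ξ₀ : ℝ,
      |hopfLax lam f₁ t₀ ξ₀ - hopfLax lam f₂ t₀ ξ₀| ≤
        sSup ((fun ξ => |f₁ ξ - f₂ ξ|) '' {ξ : ℝ | |ξ - ξ₀| ≤ t₀ * Λ}) := by
  intro t₀ ht₀ ξ₀
  have hmono₁ : Monotone f₁ := fun x y h => sub_nonneg.1 (hf₁ x y h).1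
  have hmono₂ : Monotone f₂ := fun x y h => sub_nonneg.1 (hf₂ x y h).1
  have hlip₁ (x y : ℝ) (h : x ≤ y) := (hf₁ x y h).2
  have hlip₂ (x y : ℝ) (h : x ≤ y) := (hf₂ x y h).2
  have hcone : {ξ : ℝ | |ξ - ξ₀| ≤ t₀ * Λ} = Metric.closedBall ξ₀ (t₀ * Λ) := by
    ext; simp [Real.dist_eq]
  have hbdd : BddAbove ((fun ξ => |f₁ ξ - f₂ ξ|) '' {ξ : ℝ | |ξ - ξ₀| ≤ t₀ * Λ}) := by
    rw [hcone]
    exact (isCompact_closedBall _ _).bddAbove_image <| Continuous.continuousOn <|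
      ((lipschitzWith_one_of_monotone_of_sub_le hmono₁ hlip₁).continuous.sub
        (lipschitzWith_one_of_monotone_of_sub_le hmono₂ hlip₂).continuous).abs
  set M := sSup ((fun ξ => |f₁ ξ - f₂ ξ|) '' {ξ : ℝ | |ξ - ξ₀| ≤ t₀ * Λ})
  have hsup (x : ℝ) (hx : |x - ξ₀| ≤ t₀ * Λ) : |f₁ x - f₂ x| ≤ M := le_csSup hbdd ⟨x, hx, rfl⟩
  rw [abs_sub_le_iff]
  constructor
  · linarith [hopfLax_le_hopfLax_add hmeas hpos hbd hmono₁ hlip₁ hmono₂ hlip₂ (C := M) ht₀.1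
      fun x hx => by linarith [le_abs_self (f₁ x - f₂ x), hsup x hx]]
  · linarith [hopfLax_le_hopfLax_add hmeas hpos hbd hmono₂ hlip₂ hmono₁ hlip₁ (C := M) ht₀.1
      fun x hx => by linarith [neg_abs_le (f₁ x - f₂ x), hsup x hx]]

/-- Finite propagation speed: the Hopf–Lax functions for two initial conditions differ
at `(t₀,ξ₀)` by at most the sup of `|f₁ − f₂|` over the backward light cone base. -/
theorem stmt13 (T Λ : ℝ) (hT : 0 < T) (hΛ : 0 < Λ) (lam : ℝ → ℝ → ℝ)
    (hmeas : Measurable (Function.uncurry lam))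
    (hpos : ∀ t ξ, 0 < lam t ξ) (hbd : ∀ t ξ, lam t ξ ≤ Λ)
    (f₁ f₂ : ℝ → ℝ)
    (hf₁ : ∀ ξ ξ' : ℝ, ξ ≤ ξ' → 0 ≤ f₁ ξ' - f₁ ξ ∧ f₁ ξ' - f₁ ξ ≤ ξ' - ξ)
    (hf₂ : ∀ ξ ξ' : ℝ, ξ ≤ ξ' → 0 ≤ f₂ ξ' - f₂ ξ ∧ f₂ ξ' - f₂ ξ ≤ ξ' - ξ) :
    ∀ t₀ ∈ Set.Icc (0:ℝ) T, ∀ ξ₀ : ℝ,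
      |hopfLax lam f₁ t₀ ξ₀ - hopfLax lam f₂ t₀ ξ₀| ≤
        sSup ((fun ξ => |f₁ ξ - f₂ ξ|) '' {ξ : ℝ | |ξ - ξ₀| ≤ t₀ * Λ}) :=
  stmt13_general T Λ lam hmeas hpos hbd f₁ f₂ hf₁ hf₂
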